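/- Let 1/6 ≤ ε ≤ 1/2. For all real numbers w, z, x, y with w ≥ z ≥ x ≥ y ≥ 0, w + z + x + y = 1, and w + z = 1/2 + ε, the Shannon entropy satisfies H(w,z,x,y) ≥ min(H₂(ε), H₃(ε)), where H₂(ε) = −(1/4 + 3ε/2)·log₂(1/4 + 3ε/2) − 3(1/4 − ε/2)·log₂(1/4 − ε/2) and H₃(ε) = −2ε·log₂(2ε) − 2(1/2 − ε)·log₂(1/2 − ε). Moreover H₂(ε) is attained by the admissible distribution (1/4+3ε/2, 1/4−ε/2, 1/4−ε/2, 1/4−ε/2) and H₃(ε) by the admissible distribution (2ε, 1/2−ε, 1/2−ε, 0), so the minimum entropy equals min(H₂(ε), H₃(ε)). -/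

import Mathlib

noncomputable section

/-- `−p·log₂ p`, one term of the Shannon entropy (equals `0` at `p = 0`). -/
def nmlb (p : ℝ) : ℝ := -(p * Real.logb 2 p)

/-- The Shannon entropy (in bits) of the probability vector `(w, z, x, y)`. -/
def Hent (w z x y : ℝ) : ℝ := nmlb w + nmlb z + nmlb x + nmlb y

/-- The entropy of the distribution `(1/4+3ε/2, 1/4−ε/2, 1/4−ε/2, 1/4−ε/2)`. -/
def H2 (ε : ℝ) : ℝ :=
  -((1/4 + 3*ε/2) * Real.logb 2 (1/4 + 3*ε/2))
    - 3 * ((1/4 - ε/2) * Real.logb 2 (1/4 - ε/2))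

/-- The entropy of the distribution `(2ε, 1/2−ε, 1/2−ε, 0)`. -/
def H3 (ε : ℝ) : ℝ :=
  -(2*ε * Real.logb 2 (2*ε)) - 2 * ((1/2 - ε) * Real.logb 2 (1/2 - ε))

/-!
Fix `s = w + z` and `u = x + y = 1 - s`. Since entropy is Schur-concave, lowering `z` to `x`
(and raising `w` to `s - x`) does not increase it. The resulting vector `(s - x, x, x, u - x)`,
with `u/2 ≤ x ≤ u`, lies on the segment between the two extremal distributions
`(s - u/2, u/2, u/2, u/2)` and `(s - u, u, u, 0)`, whose entropies are `H₂(ε)` and `H₃(ε)`;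
by concavity its entropy is at least the corresponding convex combination of the two, hence
at least their minimum.
-/

theorem ConcaveOn.map_add_map_sub_le {s : Set ℝ} {f : ℝ → ℝ} (hf : ConcaveOn ℝ s f)
    {t a b : ℝ} (hb : b ∈ s) (htb : t - b ∈ s) (ha₁ : t - b ≤ a) (ha₂ : a ≤ b) :
    f b + f (t - b) ≤ f a + f (t - a) := by
  obtain ⟨θ, η, hθ, hη, hθη, rfl⟩ : a ∈ segment ℝ (t - b) b := by
    rw [segment_eq_Icc (ha₁.trans ha₂)]; exact ⟨ha₁, ha₂⟩
  have h_sub : t - (θ • (t - b) + η • b) = θ • b + η • (t - b) := by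
    simp only [smul_eq_mul]; linear_combination (-t) * hθη
  have h₁ := hf.2 htb hb hθ hη hθη
  have h₂ := hf.2 hb htb hθ hη hθη
  rw [h_sub]
  simp only [smul_eq_mul] at h₁ h₂ ⊢
  linear_combination h₁ + h₂ - (f b + f (t - b)) * hθη

theorem nmlb_eq_smul_negMulLog : nmlb = (Real.log 2)⁻¹ • Real.negMulLog := by
  funext p
  simp only [nmlb, Real.negMulLog, Real.logb, Pi.smul_apply, smul_eq_mul]
  ring

theorem concaveOn_nmlb : ConcaveOn ℝ (Set.Ici 0) nmlb := by
  rw [nmlb_eq_smul_negMulLog]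
  exact Real.concaveOn_negMulLog.smul (by positivity)

theorem mul_Hent_add_mul_Hent_le {w z x y w' z' x' y' θ η : ℝ}
    (hw : 0 ≤ w) (hz : 0 ≤ z) (hx : 0 ≤ x) (hy : 0 ≤ y)
    (hw' : 0 ≤ w') (hz' : 0 ≤ z') (hx' : 0 ≤ x') (hy' : 0 ≤ y')
    (hθ : 0 ≤ θ) (hη : 0 ≤ η) (hθη : θ + η = 1) :
    θ * Hent w z x y + η * Hent w' z' x' y' ≤
      Hent (θ * w + η * w') (θ * z + η * z') (θ * x + η * x') (θ * y + η * y') := by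
  have h := fun {p q : ℝ} (hp : 0 ≤ p) (hq : 0 ≤ q) =>
    concaveOn_nmlb.2 (Set.mem_Ici.2 hp) (Set.mem_Ici.2 hq) hθ hη hθη
  simp only [smul_eq_mul] at h
  simp only [Hent]
  linarith [h hw hw', h hz hz', h hx hx', h hy hy']

theorem Hent_H2_point (ε : ℝ) :
    Hent (1/4 + 3*ε/2) (1/4 - ε/2) (1/4 - ε/2) (1/4 - ε/2) = H2 ε := by
  simp only [Hent, nmlb, H2]; ring

theorem Hent_H3_point (ε : ℝ) : Hent (2*ε) (1/2 - ε) (1/2 - ε) 0 = H3 ε := by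
  simp only [Hent, nmlb, H3]; ring

theorem Hent_lower_second_to_third_le {w z x y : ℝ} (hwz : z ≤ w) (hzx : x ≤ z) (hx : 0 ≤ x) :
    Hent (w + z - x) x x y ≤ Hent w z x y := by
  have h := concaveOn_nmlb.map_add_map_sub_le (t := w + z) (a := w) (b := w + z - x)
    (Set.mem_Ici.2 (by linarith)) (Set.mem_Ici.2 (by linarith)) (by linarith) (by linarith)
  rw [show w + z - (w + z - x) = x by ring, add_sub_cancel_left] at h
  simp only [Hent]
  linarith

theorem min_H2_H3_le_Hent {ε w z x y : ℝ} (hwz : w ≥ z) (hzx : z ≥ x) (hxy : x ≥ y)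
    (hy : y ≥ 0) (hsum : w + z + x + y = 1) (hs : w + z = 1/2 + ε) :
    min (H2 ε) (H3 ε) ≤ Hent w z x y := by
  have hx : 0 ≤ x := hy.trans hxy
  obtain ⟨θ, η, hθ, hη, hθη, hθηx⟩ : x ∈ segment ℝ ((1/2 - ε) / 2) (1/2 - ε) := by
    rw [segment_eq_Icc (by linarith)]; constructor <;> linarith
  simp only [smul_eq_mul] at hθηx
  have h_combo := mul_Hent_add_mul_Hent_le (w := 1/4 + 3*ε/2) (z := 1/4 - ε/2)
    (x := 1/4 - ε/2) (y := 1/4 - ε/2) (w' := 2*ε) (z' := 1/2 - ε) (x' := 1/2 - ε) (y' := 0)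
    (by linarith) (by linarith) (by linarith) (by linarith)
    (by linarith) (by linarith) (by linarith) le_rfl hθ hη hθη
  calc min (H2 ε) (H3 ε) ≤ θ * H2 ε + η * H3 ε := Convex.min_le_combo _ _ hθ hη hθη
    _ ≤ Hent (w + z - x) x x y := by
        rw [← Hent_H2_point, ← Hent_H3_point]
        refine h_combo.trans (le_of_eq ?_)
        congr 1
        · linear_combination (1/2 + ε) * hθη - hs - hθηx
        · linear_combination hθηx
        · linear_combination hθηx
        · linear_combination hs - hsum - hθηx + (1/2 - ε) * hθη
    _ ≤ Hent w z x y := Hent_lower_second_to_third_le hwz hzx hx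

/-- For `1/6 ≤ ε ≤ 1/2`, every Pauli-scheme probability vector `(w, z, x, y)` with
decreasingly ordered weights and approximation parameter `ε = w + z − 1/2` has Shannon
entropy at least `min(H₂(ε), H₃(ε))`; moreover `H₂(ε)` is attained by the admissible
distribution `(1/4+3ε/2, 1/4−ε/2, 1/4−ε/2, 1/4−ε/2)` and `H₃(ε)` by the admissible
distribution `(2ε, 1/2−ε, 1/2−ε, 0)`. -/
theorem optimal_entropy_large_eps (ε : ℝ) (hε0 : 1/6 ≤ ε) (hε1 : ε ≤ 1/2) :
    (∀ w z x y : ℝ, w ≥ z → z ≥ x → x ≥ y → y ≥ 0 → w + z + x + y = 1 →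
      w + z = 1/2 + ε → min (H2 ε) (H3 ε) ≤ Hent w z x y)
    ∧ ((1/4 + 3*ε/2 : ℝ) ≥ 1/4 - ε/2 ∧ (1/4 - ε/2 : ℝ) ≥ 1/4 - ε/2
        ∧ (1/4 - ε/2 : ℝ) ≥ 1/4 - ε/2 ∧ (1/4 - ε/2 : ℝ) ≥ 0
        ∧ (1/4 + 3*ε/2) + (1/4 - ε/2) + (1/4 - ε/2) + (1/4 - ε/2) = (1 : ℝ)
        ∧ (1/4 + 3*ε/2) + (1/4 - ε/2) = (1/2 : ℝ) + ε
        ∧ Hent (1/4 + 3*ε/2) (1/4 - ε/2) (1/4 - ε/2) (1/4 - ε/2) = H2 ε)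
    ∧ ((2*ε : ℝ) ≥ 1/2 - ε ∧ (1/2 - ε : ℝ) ≥ 1/2 - ε
        ∧ (1/2 - ε : ℝ) ≥ 0 ∧ (0 : ℝ) ≥ 0
        ∧ 2*ε + (1/2 - ε) + (1/2 - ε) + 0 = (1 : ℝ)
        ∧ 2*ε + (1/2 - ε) = (1/2 : ℝ) + ε
        ∧ Hent (2*ε) (1/2 - ε) (1/2 - ε) 0 = H3 ε) :=
  ⟨fun _ _ _ _ => min_H2_H3_le_Hent,
    ⟨by linarith, le_rfl, le_rfl, by linarith, by ring, by ring, Hent_H2_point ε⟩,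
    ⟨by linarith, le_rfl, by linarith, le_rfl, by ring, by ring, Hent_H3_point ε⟩⟩

end
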